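/- arXiv:2403.16772 — 6 statements merged into one kernel-verified Lean document; each statement's English description precedes it below -/
import Mathlib

section
/- Average of exponentials, product approximation (Lemma 2.1, first part): There exists an absolute constant C > 0 such that for all τ > 0 and all real α, β with α ≠ 0 and β ≠ 0, |M_τ(e^{isα}) evaluated at the sum minus the product| satisfies |M_τ(e^{is(α+β)}) − M_τ(e^{isα}) · M_τ(e^{isβ})| ≤ C · min{ |α|/|β|, |β|/|α|, τ|α|, τ|β| }. -/
/-!
Write `M(γ) = M_τ(e^{isγ})`. Besides `‖M(γ)‖ ≤ 1`, two kinds of estimates are available: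
averaging `|e^{isα} - e^{isβ}| ≤ s|α - β|` gives `‖M(α) - M(β)‖ ≤ τ|α - β|`, while the closed
form `M(γ) = (e^{iτγ} - 1)/(iτγ)` gives the decay `‖M(γ)‖ ≤ 2/(τ|γ|)` and the scale-free bound
`‖M(α) - M(β)‖ ≤ 2|α - β|/|α|`. Splitting
`M(α+β) - M(α)M(β) = (M(α+β) - M(α)) + M(α)(1 - M(β))` yields the bound `2τ|β|`, and the same
splitting around `M(β)` yields `4|α|/|β|`; exchanging `α` and `β` gives the other two terms.
-/

/-- The average `M_τ(e^{isα}) = (1/τ) ∫₀^τ e^{isα} ds` of a complex exponential. -/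
noncomputable def avgExp (τ α : ℝ) : ℂ :=
  (τ : ℂ)⁻¹ * ∫ s in (0 : ℝ)..τ, Complex.exp (Complex.I * (s : ℂ) * (α : ℂ))

open Complex intervalIntegral

lemma norm_exp_I_mul_ofReal_sub_exp_I_mul_ofReal_le (x y : ℝ) :
    ‖cexp (I * x) - cexp (I * y)‖ ≤ |x - y| := by
  have hsplit : cexp (I * x) - cexp (I * y) = cexp (I * y) * (cexp (I * ↑(x - y)) - 1) := by
    rw [mul_sub, mul_one, ← Complex.exp_add]; push_cast; ring_nf
  rw [hsplit, norm_mul, Complex.norm_exp_I_mul_ofReal, one_mul]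
  exact Real.norm_exp_I_mul_ofReal_sub_one_le

lemma norm_inv_mul_integral_le {f : ℝ → ℂ} {τ C : ℝ} (hC : 0 ≤ C)
    (hf : ∀ s ∈ Set.uIoc 0 τ, ‖f s‖ ≤ C) :
    ‖(τ : ℂ)⁻¹ * ∫ s in (0 : ℝ)..τ, f s‖ ≤ C := by
  rcases eq_or_ne τ 0 with rfl | hτ
  · simpa using hC
  calc ‖(τ : ℂ)⁻¹ * ∫ s in (0 : ℝ)..τ, f s‖ ≤ |τ|⁻¹ * (C * |τ - 0|) := by
        rw [norm_mul, norm_inv, norm_real, Real.norm_eq_abs]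
        gcongr
        exact norm_integral_le_of_norm_le_const hf
    _ = C := by rw [sub_zero]; field_simp

lemma avgExp_sub_avgExp (τ α β : ℝ) : avgExp τ α - avgExp τ β =
    (τ : ℂ)⁻¹ * ∫ s in (0 : ℝ)..τ, (cexp (I * ↑(s * α)) - cexp (I * ↑(s * β))) := by
  have hint (γ : ℝ) :
      IntervalIntegrable (fun s : ℝ ↦ cexp (I * s * γ)) MeasureTheory.volume 0 τ :=
    (by fun_prop : Continuous fun s : ℝ ↦ cexp (I * s * γ)).intervalIntegrable 0 τ
  rw [avgExp, avgExp, ← mul_sub, ← integral_sub (hint α) (hint β)]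
  push_cast
  simp only [mul_assoc]

lemma norm_avgExp_le_one (τ γ : ℝ) : ‖avgExp τ γ‖ ≤ 1 :=
  norm_inv_mul_integral_le zero_le_one fun s _ ↦ by
    rw [mul_assoc, ← ofReal_mul, norm_exp_I_mul_ofReal]

lemma norm_avgExp_sub_le (τ α β : ℝ) : ‖avgExp τ α - avgExp τ β‖ ≤ |τ| * |α - β| := by
  rw [avgExp_sub_avgExp]
  refine norm_inv_mul_integral_le (by positivity) fun s hs ↦ ?_
  calc _ ≤ |s * α - s * β| := norm_exp_I_mul_ofReal_sub_exp_I_mul_ofReal_le _ _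
    _ = |s| * |α - β| := by rw [← mul_sub, abs_mul]
    _ ≤ |τ| * |α - β| := by
        have hsτ : |s| ≤ |τ| := by
          simpa using Set.abs_sub_left_of_mem_uIcc (Set.uIoc_subset_uIcc hs)
        gcongr

lemma avgExp_zero {τ : ℝ} (hτ : τ ≠ 0) : avgExp τ 0 = 1 := by
  simp only [avgExp, ofReal_zero, mul_zero, Complex.exp_zero, integral_const, sub_zero,
    real_smul, mul_one]
  exact inv_mul_cancel₀ (ofReal_ne_zero.mpr hτ)

lemma avgExp_eq_div {τ γ : ℝ} (hγ : γ ≠ 0) :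
    avgExp τ γ = (cexp (I * ↑(τ * γ)) - 1) / (I * ↑(τ * γ)) := by
  have hc : I * γ ≠ 0 := by simp [hγ]
  simp_rw [avgExp, mul_right_comm I, integral_exp_mul_complex hc]
  push_cast
  field_simp
  ring_nf
  simp

lemma norm_one_sub_avgExp_le {τ : ℝ} (hτ : τ ≠ 0) (γ : ℝ) : ‖1 - avgExp τ γ‖ ≤ |τ| * |γ| := by
  simpa [avgExp_zero hτ] using norm_avgExp_sub_le τ 0 γ

lemma norm_avgExp_le_div {τ γ : ℝ} (hγ : γ ≠ 0) :
    ‖avgExp τ γ‖ ≤ 2 / (|τ| * |γ|) := by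
  rw [avgExp_eq_div hγ, norm_div, norm_mul, norm_I, one_mul, norm_real, Real.norm_eq_abs,
    abs_mul]
  gcongr
  calc _ ≤ ‖cexp (I * ↑(τ * γ))‖ + ‖(1 : ℂ)‖ := norm_sub_le _ _
    _ = 2 := by rw [norm_exp_I_mul_ofReal, norm_one]; norm_num

lemma norm_avgExp_sub_le_div {τ α : ℝ} (hτ : τ ≠ 0) (hα : α ≠ 0) (β : ℝ) :
    ‖avgExp τ α - avgExp τ β‖ ≤ 2 * |α - β| / |α| := by
  rcases eq_or_ne β 0 with rfl | hβ
  · calc _ ≤ ‖avgExp τ α‖ + ‖avgExp τ 0‖ := norm_sub_le _ _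
      _ ≤ 1 + 1 := add_le_add (norm_avgExp_le_one τ α) (norm_avgExp_le_one τ 0)
      _ = 2 * |α - 0| / |α| := by field_simp; norm_num
  rw [avgExp_eq_div hα, avgExp_eq_div hβ]
  have hx : τ * α ≠ 0 := mul_ne_zero hτ hα
  have hy : τ * β ≠ 0 := mul_ne_zero hτ hβ
  set x := τ * α
  set y := τ * β
  have hsplit : (cexp (I * x) - 1) / (I * x) - (cexp (I * y) - 1) / (I * y) =
      ((cexp (I * x) - cexp (I * y)) * y + (cexp (I * y) - 1) * ↑(y - x)) / (I * x * y) := by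
    have hx' : (x : ℂ) ≠ 0 := ofReal_ne_zero.mpr hx
    have hy' : (y : ℂ) ≠ 0 := ofReal_ne_zero.mpr hy
    push_cast
    field_simp
    ring
  have hnum : ‖(cexp (I * x) - cexp (I * y)) * y + (cexp (I * y) - 1) * ↑(y - x)‖ ≤
      2 * |x - y| * |y| := by
    calc _ ≤ |x - y| * |y| + |y| * |y - x| := by
          refine (norm_add_le _ _).trans (add_le_add ?_ ?_) <;>
            rw [norm_mul, norm_real, Real.norm_eq_abs]
          · gcongr; exact norm_exp_I_mul_ofReal_sub_exp_I_mul_ofReal_le x y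
          · gcongr; exact Real.norm_exp_I_mul_ofReal_sub_one_le
      _ = 2 * |x - y| * |y| := by rw [abs_sub_comm y]; ring
  have hscale : |x - y| / |x| = |α - β| / |α| := by
    rw [show x - y = τ * (α - β) by ring, abs_mul, abs_mul, mul_div_mul_left _ _ (by positivity)]
  rw [hsplit, norm_div, norm_mul, norm_mul, norm_I, one_mul, norm_real, norm_real,
    Real.norm_eq_abs, Real.norm_eq_abs, mul_div_assoc, ← hscale]
  calc _ ≤ 2 * |x - y| * |y| / (|x| * |y|) := by gcongr
    _ = 2 * (|x - y| / |x|) := by field_simp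

lemma norm_avgExp_add_sub_mul_le_mul_abs {τ : ℝ} (hτ : τ ≠ 0) (α β : ℝ) :
    ‖avgExp τ (α + β) - avgExp τ α * avgExp τ β‖ ≤ 2 * (|τ| * |β|) := by
  have hsplit : avgExp τ (α + β) - avgExp τ α * avgExp τ β =
      (avgExp τ (α + β) - avgExp τ α) + avgExp τ α * (1 - avgExp τ β) := by ring
  rw [hsplit]
  calc _ ≤ ‖avgExp τ (α + β) - avgExp τ α‖ + ‖avgExp τ α‖ * ‖1 - avgExp τ β‖ :=
        (norm_add_le _ _).trans_eq (by rw [norm_mul])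
    _ ≤ |τ| * |β| + 1 * (|τ| * |β|) := by
        gcongr
        · simpa using norm_avgExp_sub_le τ (α + β) α
        · exact norm_avgExp_le_one τ α
        · exact norm_one_sub_avgExp_le hτ β
    _ = 2 * (|τ| * |β|) := by ring

lemma norm_avgExp_add_sub_mul_le_div {τ β : ℝ} (hτ : τ ≠ 0) (hβ : β ≠ 0) (α : ℝ) :
    ‖avgExp τ (α + β) - avgExp τ α * avgExp τ β‖ ≤ 4 * (|α| / |β|) := by
  have hsplit : avgExp τ (α + β) - avgExp τ α * avgExp τ β =
      -(avgExp τ β - avgExp τ (α + β)) + avgExp τ β * (1 - avgExp τ α) := by ring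
  rw [hsplit]
  calc _ ≤ ‖avgExp τ β - avgExp τ (α + β)‖ + ‖avgExp τ β‖ * ‖1 - avgExp τ α‖ :=
        (norm_add_le _ _).trans_eq (by rw [norm_neg, norm_mul])
    _ ≤ 2 * |β - (α + β)| / |β| + 2 / (|τ| * |β|) * (|τ| * |α|) := by
        gcongr
        · exact norm_avgExp_sub_le_div hτ hβ _
        · exact norm_avgExp_le_div hβ
        · exact norm_one_sub_avgExp_le hτ α
    _ = 4 * (|α| / |β|) := by
        rw [show β - (α + β) = -α by ring, abs_neg]
        field_simp
        ring

/-- Average of exponentials, product approximation (Lemma 2.1, first part):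
there is an absolute constant `C > 0` such that for all `τ > 0` and nonzero reals `α`, `β`,
`|M_τ(e^{is(α+β)}) − M_τ(e^{isα}) M_τ(e^{isβ})| ≤ C min{|α|/|β|, |β|/|α|, τ|α|, τ|β|}`. -/
theorem avgExp_product_approx :
    ∃ C > 0, ∀ τ : ℝ, 0 < τ → ∀ α β : ℝ, α ≠ 0 → β ≠ 0 →
      ‖avgExp τ (α + β) - avgExp τ α * avgExp τ β‖ ≤
        C * min (min (|α| / |β|) (|β| / |α|)) (min (τ * |α|) (τ * |β|)) := by
  refine ⟨4, by norm_num, fun τ hτ α β hα hβ => ?_⟩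
  have hcomm : avgExp τ (β + α) - avgExp τ β * avgExp τ α =
      avgExp τ (α + β) - avgExp τ α * avgExp τ β := by rw [add_comm, mul_comm]
  have hα_β := norm_avgExp_add_sub_mul_le_div hτ.ne' hβ α
  have hβ_α := hcomm ▸ norm_avgExp_add_sub_mul_le_div hτ.ne' hα β
  have hτβ := norm_avgExp_add_sub_mul_le_mul_abs hτ.ne' α β
  have hτα := hcomm ▸ norm_avgExp_add_sub_mul_le_mul_abs hτ.ne' β α
  rw [abs_of_pos hτ] at hτα hτβ
  have hτα₀ : 0 ≤ τ * |α| := by positivity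
  have hτβ₀ : 0 ≤ τ * |β| := by positivity
  simp only [mul_min_of_nonneg _ _ (by norm_num : (0 : ℝ) ≤ 4)]
  exact le_min (le_min hα_β hβ_α) (le_min (by linarith) (by linarith))
end

section
/- Bounds on Picard iterates for a quantitatively well-posed equation (Lemma 2.3, after Tao): Let D and S be complex Banach spaces, k ≥ 2 an integer, and C > 0. Let L : D → S be a linear map with ‖L(f)‖_S ≤ C‖f‖_D for all f ∈ D, and let N : S^k → S be a k-multilinear map with ‖N(u₁,…,u_k)‖_S ≤ C‖u₁‖_S⋯‖u_k‖_S for all u₁,…,u_k ∈ S. Define A₁(f) = L(f) and, for n ≥ 2, A_n(f) = Σ N(A_{n₁}(f),…,A_{n_k}(f)), the sum running over all k-tuples (n₁,…,n_k) of positive integers with n₁+⋯+n_k = n. Then there exists a constant C₁ > 0 such that for all n ≥ 1 and all f, g ∈ D: ‖A_n(f) − A_n(g)‖_S ≤ C₁^n (‖f‖_D + ‖g‖_D)^{n−1} ‖f − g‖_D. -/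
/-!
Call `β : ℕ → ℝ` a majorant if `C ≤ β 1` and `k C ∑_{n₁+⋯+n_k=n} ∏ β(nᵢ) ≤ β n` for `n ≥ 2`.
By strong induction `‖A_n f − A_n g‖ ≤ β n (‖f‖+‖g‖)^{n−1} ‖f−g‖`: multilinearity splits
`N u − N v` into `k` terms carrying one difference each, and the other factors are controlled
by the case `g = 0` of the induction hypothesis (`A_q 0 = 0`).
A pure geometric sequence is no majorant, as the number of compositions of `n` grows
exponentially, but `β n = ε Rⁿ / n²` is: some part satisfies `nᵢ ≥ n / k`, whence
`∑ ∏ nᵢ⁻² ≤ k³ 2ᵏ / n²`, and for `k ≥ 2` the `k` factors `ε` of the product absorb this constant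
once `ε` is small. Then `C₁ = R` works.
-/

open Finset

def compositionTuples (k n : ℕ) : Finset (Fin k → ℕ) :=
  (Fintype.piFinset fun _ : Fin k => range (n + 1)).filter
    (fun m => (∀ i, 1 ≤ m i) ∧ ∑ i, m i = n)

section compositionTuples

variable {k n : ℕ} {m : Fin k → ℕ}

theorem mem_compositionTuples : m ∈ compositionTuples k n ↔ (∀ i, 1 ≤ m i) ∧ ∑ i, m i = n := by
  refine ⟨fun hm => (mem_filter.1 hm).2, fun hm => mem_filter.2 ⟨?_, hm⟩⟩
  refine Fintype.mem_piFinset.2 fun i => mem_range.2 (Nat.lt_succ_of_le ?_)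
  exact hm.2 ▸ single_le_sum (fun _ _ => Nat.zero_le _) (mem_univ i)

theorem lt_of_mem_compositionTuples (hk : 2 ≤ k) (hm : m ∈ compositionTuples k n) (i : Fin k) :
    m i < n := by
  have : Nontrivial (Fin k) := Fin.nontrivial_iff_two_le.2 hk
  obtain ⟨j, hji⟩ := exists_ne i
  obtain ⟨hpos, hsum⟩ := mem_compositionTuples.1 hm
  calc m i < m i + m j := Nat.lt_add_of_pos_right (hpos j)
    _ = ∑ l ∈ {i, j}, m l := (sum_pair hji.symm).symm
    _ ≤ n := hsum ▸ sum_le_sum_of_subset (subset_univ _)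

theorem exists_le_mul_of_mem_compositionTuples (hn : 0 < n) (hm : m ∈ compositionTuples k n) :
    ∃ i, n ≤ k * m i := by
  obtain ⟨-, hsum⟩ := mem_compositionTuples.1 hm
  have hk : (univ : Finset (Fin k)).Nonempty :=
    univ_nonempty_iff.2 ⟨⟨0, Nat.pos_of_ne_zero fun hk => by subst hk; simp at hsum; omega⟩⟩
  have : ∑ _i : Fin k, n ≤ ∑ i, k * m i := by simp [← mul_sum, hsum]
  obtain ⟨i, -, hi⟩ := exists_le_of_sum_le hk this
  exact ⟨i, hi⟩

theorem injOn_update_compositionTuples (i₀ : Fin k) (c : ℕ) :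
    Set.InjOn (Function.update · i₀ c) (compositionTuples k n : Set (Fin k → ℕ)) := by
  intro x hx y hy hxy
  have hoff : ∀ i ≠ i₀, x i = y i := fun i hi => by
    simpa [Function.update_of_ne hi] using congrFun hxy i
  have hx' := (mem_compositionTuples.1 hx).2
  have hy' := (mem_compositionTuples.1 hy).2
  rw [← add_sum_erase _ _ (mem_univ i₀)] at hx' hy'
  rw [sum_congr rfl fun i hi => hoff i (ne_of_mem_erase hi)] at hx'
  funext i
  rcases eq_or_ne i i₀ with rfl | hi
  · exact Nat.add_right_cancel (hx'.trans hy'.symm)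
  · exact hoff i hi

theorem image_update_compositionTuples_subset (hn : 0 < n) (i₀ : Fin k) :
    (compositionTuples k n).image (Function.update · i₀ 1) ⊆
      Fintype.piFinset fun _ : Fin k => Ioo 0 (n + 1) := by
  simp only [subset_iff, mem_image, Fintype.mem_piFinset, mem_Ioo]
  rintro _ ⟨m, hm, rfl⟩ i
  obtain ⟨hpos, hsum⟩ := mem_compositionTuples.1 hm
  by_cases hi : i = i₀
  · rw [hi, Function.update_self]; omega
  · rw [Function.update_of_ne hi]
    have := single_le_sum (fun j _ => Nat.zero_le (m j)) (mem_univ i)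
    have := hpos i
    omega

theorem sum_compositionTuples_filter_prod_inv_sq_le (hn : 0 < n) (i₀ : Fin k) :
    ∑ m ∈ (compositionTuples k n).filter (fun m => n ≤ k * m i₀), ∏ i, ((m i : ℝ) ^ 2)⁻¹ ≤
      ((k : ℝ) / n) ^ 2 * 2 ^ k := by
  set F : (Fin k → ℕ) → ℝ := fun m => ∏ i, ((m i : ℝ) ^ 2)⁻¹
  set T := (compositionTuples k n).filter (fun m => n ≤ k * m i₀)
  have hF : ∀ m, F m = ((m i₀ : ℝ) ^ 2)⁻¹ * F (Function.update m i₀ 1) := fun m => by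
    simp only [F, ← mul_prod_erase univ _ (mem_univ i₀), Function.update_self, Nat.cast_one,
      one_pow, inv_one, one_mul]
    congr 1
    exact prod_congr rfl fun i hi => by rw [Function.update_of_ne (ne_of_mem_erase hi)]
  have hbig : ∀ m ∈ T, ((m i₀ : ℝ) ^ 2)⁻¹ ≤ ((k : ℝ) / n) ^ 2 := fun m hm => by
    have hm' := mem_filter.1 hm
    have h1 : (1 : ℝ) ≤ m i₀ := by exact_mod_cast (mem_compositionTuples.1 hm'.1).1 i₀
    have h2 : (n : ℝ) ≤ k * m i₀ := by exact_mod_cast hm'.2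
    rw [← inv_pow]
    gcongr
    rw [le_div_iff₀ (by exact_mod_cast hn), inv_mul_le_iff₀ (by positivity)]
    linarith
  have himage : T.image (Function.update · i₀ 1) ⊆
      Fintype.piFinset fun _ : Fin k => Ioo 0 (n + 1) :=
    (image_subset_image (filter_subset _ _)).trans (image_update_compositionTuples_subset hn i₀)
  calc ∑ m ∈ T, F m ≤ ∑ m ∈ T, ((k : ℝ) / n) ^ 2 * F (Function.update m i₀ 1) := by
        refine sum_le_sum fun m hm => (hF m).trans_le ?_
        exact mul_le_mul_of_nonneg_right (hbig m hm) (prod_nonneg fun _ _ => by positivity)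
    _ = ((k : ℝ) / n) ^ 2 * ∑ m ∈ T.image (Function.update · i₀ 1), F m := by
        rw [mul_sum, sum_image fun x hx y hy =>
          injOn_update_compositionTuples i₀ 1 (mem_filter.1 hx).1 (mem_filter.1 hy).1]
    _ ≤ ((k : ℝ) / n) ^ 2 * ∏ _i : Fin k, ∑ v ∈ Ioo 0 (n + 1), ((v : ℝ) ^ 2)⁻¹ := by
        rw [prod_univ_sum]
        gcongr
    _ ≤ ((k : ℝ) / n) ^ 2 * 2 ^ k := by
        gcongr
        refine (prod_le_prod (fun _ _ => sum_nonneg fun _ _ => by positivity)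
          fun _ _ => sum_Ioo_inv_sq_le 0 (n + 1)).trans ?_
        norm_num

theorem sum_compositionTuples_prod_inv_sq_le (hn : 0 < n) :
    ∑ m ∈ compositionTuples k n, ∏ i, ((m i : ℝ) ^ 2)⁻¹ ≤ (k : ℝ) ^ 3 * 2 ^ k / n ^ 2 := by
  calc ∑ m ∈ compositionTuples k n, ∏ i, ((m i : ℝ) ^ 2)⁻¹
      ≤ ∑ i₀ : Fin k, ∑ m ∈ (compositionTuples k n).filter (fun m => n ≤ k * m i₀),
          ∏ i, ((m i : ℝ) ^ 2)⁻¹ := by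
        simp only [sum_filter]
        rw [sum_comm]
        refine sum_le_sum fun m hm => ?_
        obtain ⟨i₀, hi₀⟩ := exists_le_mul_of_mem_compositionTuples hn hm
        refine le_trans ?_ (single_le_sum (fun i _ => ?_) (mem_univ i₀))
        · rw [if_pos hi₀]
        · split_ifs <;> positivity
    _ ≤ ∑ _i₀ : Fin k, ((k : ℝ) / n) ^ 2 * 2 ^ k :=
        sum_le_sum fun i₀ _ => sum_compositionTuples_filter_prod_inv_sq_le hn i₀
    _ = (k : ℝ) ^ 3 * 2 ^ k / n ^ 2 := by
        rw [sum_const, card_univ, Fintype.card_fin, nsmul_eq_mul]; ring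

end compositionTuples

theorem MultilinearMap.norm_map_sub_map_le {𝕜 ι G : Type*} {E : ι → Type*}
    [NontriviallyNormedField 𝕜] [Fintype ι] [DecidableEq ι]
    [∀ i, SeminormedAddCommGroup (E i)] [∀ i, NormedSpace 𝕜 (E i)]
    [SeminormedAddCommGroup G] [NormedSpace 𝕜 G]
    (f : MultilinearMap 𝕜 E G) {C : ℝ} (hC : 0 ≤ C) (hf : ∀ u, ‖f u‖ ≤ C * ∏ i, ‖u i‖)
    {u v : ∀ i, E i} {a d : ι → ℝ} (hu : ∀ i, ‖u i‖ ≤ a i) (hv : ∀ i, ‖v i‖ ≤ a i)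
    (hd : ∀ i, ‖u i - v i‖ ≤ d i) :
    ‖f u - f v‖ ≤ C * ∑ j, d j * ∏ i ∈ univ.erase j, a i := by
  refine (f.norm_image_sub_le_of_bound' hC hf u v).trans ?_
  gcongr with j
  rw [← mul_prod_erase univ _ (mem_univ j), if_pos rfl,
    prod_congr rfl fun i hi => if_neg (ne_of_mem_erase hi)]
  gcongr with i
  · exact (norm_nonneg _).trans (hd j)
  · exact hd j
  · exact max_le (hu i) (hv i)

theorem pow_pred_mul_prod_erase_pow {M ι : Type*} [CommMonoid M] [Fintype ι] [DecidableEq ι]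
    (x : M) {m : ι → ℕ} {j : ι} (hj : 1 ≤ m j) :
    x ^ (m j - 1) * ∏ i ∈ univ.erase j, x ^ m i = x ^ (∑ i, m i - 1) := by
  rw [prod_pow_eq_pow_sum, ← pow_add, ← add_sum_erase _ _ (mem_univ j)]
  congr 1
  omega

structure IsPicardExpansion {R D S : Type*} [CommSemiring R] [AddCommMonoid D] [Module R D]
    [AddCommMonoid S] [Module R S] {k : ℕ} (L : D →ₗ[R] S)
    (N : MultilinearMap R (fun _ : Fin k => S) S) (A : ℕ → D → S) : Prop where
  apply_one : ∀ f, A 1 f = L f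
  apply_of_two_le : ∀ n, 2 ≤ n → ∀ f, A n f = ∑ m ∈ compositionTuples k n, N fun i => A (m i) f

namespace IsPicardExpansion

theorem apply_zero {R D S : Type*} [CommSemiring R] [AddCommMonoid D] [Module R D]
    [AddCommMonoid S] [Module R S] {k : ℕ} {L : D →ₗ[R] S}
    {N : MultilinearMap R (fun _ : Fin k => S) S} {A : ℕ → D → S}
    (hA : IsPicardExpansion L N A) (hk : 2 ≤ k) {n : ℕ} (hn : 1 ≤ n) : A n 0 = 0 := by
  induction n using Nat.strong_induction_on with
  | _ n ih =>
    rcases hn.eq_or_lt with rfl | hn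
    · rw [hA.apply_one, map_zero]
    · rw [hA.apply_of_two_le n hn]
      refine sum_eq_zero fun m hm => N.map_coord_zero ⟨0, by omega⟩ ?_
      exact ih _ (lt_of_mem_compositionTuples hk hm _) ((mem_compositionTuples.1 hm).1 _)

variable {𝕜 D S : Type*} [NontriviallyNormedField 𝕜] [SeminormedAddCommGroup D] [NormedSpace 𝕜 D]
  [SeminormedAddCommGroup S] [NormedSpace 𝕜 S] {k : ℕ} {L : D →ₗ[𝕜] S}
  {N : MultilinearMap 𝕜 (fun _ : Fin k => S) S} {A : ℕ → D → S} {C : ℝ} {β : ℕ → ℝ}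

theorem norm_sub_le_of_forall_lt (hA : IsPicardExpansion L N A) (hk : 2 ≤ k) (hC : 0 ≤ C)
    (hN : ∀ u, ‖N u‖ ≤ C * ∏ i, ‖u i‖) (hβ0 : ∀ n, 0 ≤ β n) {n : ℕ} (hn : 2 ≤ n)
    (hβ : k * C * ∑ m ∈ compositionTuples k n, ∏ i, β (m i) ≤ β n)
    (ih : ∀ q < n, 1 ≤ q → ∀ f g, ‖A q f - A q g‖ ≤ β q * (‖f‖ + ‖g‖) ^ (q - 1) * ‖f - g‖)
    (f g : D) : ‖A n f - A n g‖ ≤ β n * (‖f‖ + ‖g‖) ^ (n - 1) * ‖f - g‖ := by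
  set X := ‖f‖ + ‖g‖
  have hsize : ∀ q < n, 1 ≤ q → ∀ h : D, ‖h‖ ≤ X → ‖A q h‖ ≤ β q * X ^ q := by
    intro q hq hq1 h hh
    have := ih q hq hq1 h 0
    rw [hA.apply_zero hk hq1, sub_zero, norm_zero, add_zero, sub_zero, mul_assoc,
      pow_sub_one_mul (by omega : q ≠ 0)] at this
    exact this.trans (by gcongr; exact hβ0 q)
  have htuple : ∀ m ∈ compositionTuples k n,
      ‖N (fun i => A (m i) f) - N (fun i => A (m i) g)‖ ≤
        k * C * (∏ i, β (m i)) * (X ^ (n - 1) * ‖f - g‖) := by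
    intro m hm
    obtain ⟨hpos, hsum⟩ := mem_compositionTuples.1 hm
    have hlt := lt_of_mem_compositionTuples hk hm
    calc _ ≤ C * ∑ j, β (m j) * X ^ (m j - 1) * ‖f - g‖ * ∏ i ∈ univ.erase j, β (m i) * X ^ m i :=
          N.norm_map_sub_map_le hC hN
            (fun i => hsize _ (hlt i) (hpos i) f (le_add_of_nonneg_right (norm_nonneg g)))
            (fun i => hsize _ (hlt i) (hpos i) g (le_add_of_nonneg_left (norm_nonneg f)))
            (fun i => ih _ (hlt i) (hpos i) f g)
      _ = C * ∑ _j : Fin k, (∏ i, β (m i)) * (X ^ (n - 1) * ‖f - g‖) := by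
          congr 1
          refine sum_congr rfl fun j _ => ?_
          rw [← mul_prod_erase univ _ (mem_univ j), ← hsum,
            ← pow_pred_mul_prod_erase_pow X (hpos j), prod_mul_distrib]
          ring
      _ = _ := by rw [sum_const, card_univ, Fintype.card_fin, nsmul_eq_mul]; ring
  rw [hA.apply_of_two_le n hn f, hA.apply_of_two_le n hn g, ← sum_sub_distrib]
  calc _ ≤ ∑ m ∈ compositionTuples k n, k * C * (∏ i, β (m i)) * (X ^ (n - 1) * ‖f - g‖) :=
        (norm_sum_le _ _).trans (sum_le_sum htuple)
    _ = k * C * (∑ m ∈ compositionTuples k n, ∏ i, β (m i)) * (X ^ (n - 1) * ‖f - g‖) := by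
        rw [← sum_mul, ← mul_sum]
    _ ≤ β n * (X ^ (n - 1) * ‖f - g‖) := by gcongr
    _ = _ := by ring

theorem norm_sub_le_of_majorant (hA : IsPicardExpansion L N A) (hk : 2 ≤ k) (hC : 0 ≤ C)
    (hL : ∀ f, ‖L f‖ ≤ C * ‖f‖) (hN : ∀ u, ‖N u‖ ≤ C * ∏ i, ‖u i‖) (hβ0 : ∀ n, 0 ≤ β n)
    (hβ1 : C ≤ β 1) (hβ : ∀ n, 2 ≤ n → k * C * ∑ m ∈ compositionTuples k n, ∏ i, β (m i) ≤ β n)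
    {n : ℕ} (hn : 1 ≤ n) (f g : D) :
    ‖A n f - A n g‖ ≤ β n * (‖f‖ + ‖g‖) ^ (n - 1) * ‖f - g‖ := by
  induction n using Nat.strong_induction_on generalizing f g with
  | _ n ih =>
    rcases hn.eq_or_lt with rfl | hn
    · rw [hA.apply_one, hA.apply_one, ← map_sub, pow_zero, mul_one]
      exact (hL _).trans (by gcongr)
    · exact hA.norm_sub_le_of_forall_lt hk hC hN hβ0 hn (hβ n hn)
        (fun q hq hq1 => ih q hq hq1) f g

end IsPicardExpansion

noncomputable def invSqMajorant (ε R : ℝ) (n : ℕ) : ℝ := ε * R ^ n / (n : ℝ) ^ 2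

section invSqMajorant

variable {ε R : ℝ}

theorem invSqMajorant_nonneg (hε : 0 ≤ ε) (hR : 0 ≤ R) (n : ℕ) : 0 ≤ invSqMajorant ε R n := by
  unfold invSqMajorant; positivity

theorem invSqMajorant_le_pow (hε0 : 0 ≤ ε) (hε1 : ε ≤ 1) (hR : 0 ≤ R) {n : ℕ} (hn : 1 ≤ n) :
    invSqMajorant ε R n ≤ R ^ n :=
  (div_le_self (by positivity) (one_le_pow₀ (by exact_mod_cast hn))).trans
    (mul_le_of_le_one_left (by positivity) hε1)

theorem invSqMajorant_recursion {k : ℕ} (hk : 2 ≤ k) {C : ℝ} (hC : 0 ≤ C) (hε0 : 0 ≤ ε)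
    (hε1 : ε ≤ 1) (hR : 0 ≤ R) (hsmall : (k : ℝ) ^ 4 * 2 ^ k * C * ε ≤ 1) {n : ℕ} (hn : 1 ≤ n) :
    k * C * ∑ m ∈ compositionTuples k n, ∏ i, invSqMajorant ε R (m i) ≤ invSqMajorant ε R n := by
  have hprod : ∀ m ∈ compositionTuples k n,
      ∏ i, invSqMajorant ε R (m i) = ε ^ k * R ^ n * ∏ i, ((m i : ℝ) ^ 2)⁻¹ := fun m hm => by
    simp only [invSqMajorant, div_eq_mul_inv, prod_mul_distrib, prod_const, card_univ,
      Fintype.card_fin, prod_pow_eq_pow_sum, (mem_compositionTuples.1 hm).2]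
  calc _ = k * C * (ε ^ k * R ^ n * ∑ m ∈ compositionTuples k n, ∏ i, ((m i : ℝ) ^ 2)⁻¹) := by
        rw [sum_congr rfl hprod, ← mul_sum]
    _ ≤ k * C * (ε ^ k * R ^ n * ((k : ℝ) ^ 3 * 2 ^ k / n ^ 2)) := by
        gcongr; exact sum_compositionTuples_prod_inv_sq_le hn
    _ = ((k : ℝ) ^ 4 * 2 ^ k * C * ε) * ε ^ (k - 1) * (R ^ n / n ^ 2) := by
        rw [← pow_sub_one_mul (by omega : k ≠ 0) ε]; ring
    _ ≤ 1 * ε * (R ^ n / n ^ 2) := by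
        gcongr; exact pow_le_of_le_one hε0 hε1 (by omega)
    _ = invSqMajorant ε R n := by rw [invSqMajorant]; ring

end invSqMajorant

theorem picard_iterates_lipschitz_bound_general
    (D S : Type*) [NormedAddCommGroup D] [NormedSpace ℂ D]
    [NormedAddCommGroup S] [NormedSpace ℂ S]
    (k : ℕ) (hk : 2 ≤ k) (C : ℝ) (hC : 0 < C)
    (L : D →ₗ[ℂ] S) (hL : ∀ f : D, ‖L f‖ ≤ C * ‖f‖)
    (N : MultilinearMap ℂ (fun _ : Fin k => S) S)
    (hN : ∀ u : Fin k → S, ‖N u‖ ≤ C * ∏ i, ‖u i‖)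
    (A : ℕ → D → S)
    (hA1 : ∀ f : D, A 1 f = L f)
    (hArec : ∀ n : ℕ, 2 ≤ n → ∀ f : D, A n f =
      ∑ m ∈ (Fintype.piFinset fun _ : Fin k => Finset.range (n + 1)).filter
          (fun m => (∀ i, 1 ≤ m i) ∧ ∑ i, m i = n),
        N (fun i => A (m i) f)) :
    ∃ C₁ > 0, ∀ n : ℕ, 1 ≤ n → ∀ f g : D,
      ‖A n f - A n g‖ ≤ C₁ ^ n * (‖f‖ + ‖g‖) ^ (n - 1) * ‖f - g‖ := by
  have hA : IsPicardExpansion L N A := ⟨hA1, hArec⟩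
  have hc : 0 < (k : ℝ) ^ 4 * 2 ^ k * C := by positivity
  set ε := min 1 ((k : ℝ) ^ 4 * 2 ^ k * C)⁻¹
  have hε0 : 0 < ε := lt_min one_pos (inv_pos.2 hc)
  have hε1 : ε ≤ 1 := min_le_left _ _
  have hsmall : (k : ℝ) ^ 4 * 2 ^ k * C * ε ≤ 1 :=
    (mul_le_mul_of_nonneg_left (min_le_right _ _) hc.le).trans (mul_inv_cancel₀ hc.ne').le
  have hR : 0 ≤ C / ε := by positivity
  refine ⟨C / ε, by positivity, fun n hn f g => ?_⟩
  calc ‖A n f - A n g‖ ≤ invSqMajorant ε (C / ε) n * (‖f‖ + ‖g‖) ^ (n - 1) * ‖f - g‖ :=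
        hA.norm_sub_le_of_majorant hk hC.le hL hN (invSqMajorant_nonneg hε0.le hR)
          (by simp [invSqMajorant, mul_div_cancel₀ C hε0.ne'])
          (fun n hn => invSqMajorant_recursion hk hC.le hε0.le hε1 hR hsmall (by omega)) hn f g
    _ ≤ (C / ε) ^ n * (‖f‖ + ‖g‖) ^ (n - 1) * ‖f - g‖ := by
        gcongr; exact invSqMajorant_le_pow hε0.le hε1 hR hn

/-- Bounds on Picard iterates for a quantitatively well-posed equation (Lemma 2.3,
after Tao): given complex Banach spaces `D`, `S`, a bounded linear map `L : D → S`,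
a bounded `k`-multilinear map `N : S^k → S` (with common bound `C`), and the Picard
iterates `A₁(f) = L f`, `A_n(f) = Σ_{n₁+⋯+n_k=n, nᵢ≥1} N(A_{n₁}(f),…,A_{n_k}(f))` for
`n ≥ 2`, there is `C₁ > 0` with
`‖A_n(f) − A_n(g)‖ ≤ C₁^n (‖f‖+‖g‖)^{n−1} ‖f−g‖` for all `n ≥ 1` and `f, g ∈ D`. -/
theorem picard_iterates_lipschitz_bound
    (D S : Type*) [NormedAddCommGroup D] [NormedSpace ℂ D] [CompleteSpace D]
    [NormedAddCommGroup S] [NormedSpace ℂ S] [CompleteSpace S]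
    (k : ℕ) (hk : 2 ≤ k) (C : ℝ) (hC : 0 < C)
    (L : D →ₗ[ℂ] S) (hL : ∀ f : D, ‖L f‖ ≤ C * ‖f‖)
    (N : MultilinearMap ℂ (fun _ : Fin k => S) S)
    (hN : ∀ u : Fin k → S, ‖N u‖ ≤ C * ∏ i, ‖u i‖)
    (A : ℕ → D → S)
    (hA1 : ∀ f : D, A 1 f = L f)
    (hArec : ∀ n : ℕ, 2 ≤ n → ∀ f : D, A n f =
      ∑ m ∈ (Fintype.piFinset fun _ : Fin k => Finset.range (n + 1)).filter
          (fun m => (∀ i, 1 ≤ m i) ∧ ∑ i, m i = n),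
        N (fun i => A (m i) f)) :
    ∃ C₁ > 0, ∀ n : ℕ, 1 ≤ n → ∀ f g : D,
      ‖A n f - A n g‖ ≤ C₁ ^ n * (‖f‖ + ‖g‖) ^ (n - 1) * ‖f - g‖ :=
  picard_iterates_lipschitz_bound_general D S k hk C hC L hL N hN A hA1 hArec
end

section
/- Interpolated lower bound on the Schrödinger phase (inequality (phs-3)): For all integers k and k₂ with k² ≠ k₂², one has |k² − k₂²| ≥ |k|^{3/4} · |k − k₂|^{1/4}. -/
/-! Write `k² − k₂² = (k − k₂)(k + k₂)`. Both factors are nonzero integers, hence of absolute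
value at least `1`, so the product dominates each factor, and it dominates `|k|` as well because
`2|k| ≤ |k − k₂| + |k + k₂|` and `u + v ≤ 2uv` for `u, v ≥ 1`. Since `|k² − k₂²|` bounds both
`|k|` and `|k − k₂|`, it bounds any weighted geometric mean of the two. -/

theorem Real.rpow_mul_rpow_le_of_le {x y z a b : ℝ} (hx : 0 ≤ x) (hy : 0 ≤ y) (hxz : x ≤ z)
    (hyz : y ≤ z) (ha : 0 ≤ a) (hb : 0 ≤ b) (hab : a + b = 1) : x ^ a * y ^ b ≤ z := by
  have hz : 0 ≤ z := hx.trans hxz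
  calc x ^ a * y ^ b ≤ z ^ a * z ^ b := by gcongr
    _ = z := by rw [← Real.rpow_add' hz (by simp [hab]), hab, Real.rpow_one]

namespace Int

variable {a b : ℤ}

theorem abs_sq_sub_sq_eq_mul : |a ^ 2 - b ^ 2| = |a - b| * |a + b| := by
  rw [← abs_mul]; ring_nf

theorem one_le_abs_sub_of_sq_ne_sq (h : a ^ 2 ≠ b ^ 2) : 1 ≤ |a - b| :=
  Int.one_le_abs (sub_ne_zero.2 fun hab => h (by rw [hab]))

theorem one_le_abs_add_of_sq_ne_sq (h : a ^ 2 ≠ b ^ 2) : 1 ≤ |a + b| :=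
  Int.one_le_abs fun hab => h (by rw [eq_neg_of_add_eq_zero_left hab, neg_sq])

theorem abs_sub_le_abs_sq_sub_sq (h : a ^ 2 ≠ b ^ 2) : |a - b| ≤ |a ^ 2 - b ^ 2| := by
  rw [abs_sq_sub_sq_eq_mul]
  exact le_mul_of_one_le_right (abs_nonneg _) (one_le_abs_add_of_sq_ne_sq h)

theorem abs_le_abs_sq_sub_sq (h : a ^ 2 ≠ b ^ 2) : |a| ≤ |a ^ 2 - b ^ 2| := by
  have hsub := one_le_abs_sub_of_sq_ne_sq h
  have hadd := one_le_abs_add_of_sq_ne_sq h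
  have htwo : 2 * |a| ≤ |a - b| + |a + b| := by
    simpa [two_mul, abs_two, ← two_mul] using abs_add_le (a - b) (a + b)
  rw [abs_sq_sub_sq_eq_mul]
  nlinarith

end Int

/-- Interpolated lower bound on the Schrödinger phase (inequality (phs-3)):
for integers `k`, `k₂` with `k² ≠ k₂²`, one has `|k² − k₂²| ≥ |k|^(3/4) · |k − k₂|^(1/4)`. -/
theorem abs_sq_sub_sq_interp (k k₂ : ℤ) (h : k ^ 2 ≠ k₂ ^ 2) :
    (|k| : ℝ) ^ ((3 : ℝ) / 4) * (|k - k₂| : ℝ) ^ ((1 : ℝ) / 4) ≤ (|k ^ 2 - k₂ ^ 2| : ℝ) := by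
  have hk : (|k| : ℝ) ≤ (|k ^ 2 - k₂ ^ 2| : ℝ) := by exact_mod_cast Int.abs_le_abs_sq_sub_sq h
  have hd : (|k - k₂| : ℝ) ≤ (|k ^ 2 - k₂ ^ 2| : ℝ) := by
    exact_mod_cast Int.abs_sub_le_abs_sq_sub_sq h
  exact Real.rpow_mul_rpow_le_of_le (by positivity) (by positivity) hk hd (by norm_num)
    (by norm_num) (by norm_num)
end

section
/- Divergence of the second Picard iterate, case p = ∞ (core of Theorem 1.4): For every s ≥ 0 and every positive integer M₀, setting t = (π/2) M₀^{−2}, the series Σ_{k=1}^∞ (1+k²)^{s+3/2} k^{−(4+2s)} |e^{itk²} − 1|² diverges; that is, the function k ↦ (1+k²)^{s+3/2} k^{−(4+2s)} |e^{itk²} − 1|² is not summable over the positive integers. -/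
/-!
At the times `n = M₀ (2j + 1)` the phase `t n² = (π/2)(2j+1)²` is `π/2` modulo `2π`, so
`|e^{itn²} - 1|² = |i - 1|² = 2`, while the weight `(1+n²)^{s+3/2} n^{-(4+2s)}` is at least `1/n`.
The series therefore dominates twice the harmonic series along the progression
`M₀ (2j + 1)`, which diverges.
-/

open Complex Real

theorem Complex.exp_I_mul_pi_div_two_mul_sq_of_odd {m : ℤ} (hm : Odd m) :
    exp (I * ((π / 2 * (m : ℝ) ^ 2 : ℝ) : ℂ)) = I := by
  obtain ⟨j, rfl⟩ := hm
  have harg : I * ((π / 2 * ((2 * j + 1 : ℤ) : ℝ) ^ 2 : ℝ) : ℂ)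
      = ((j ^ 2 + j : ℤ) : ℂ) * (2 * π * I) + π / 2 * I := by
    push_cast
    ring
  rw [harg, exp_add, Complex.exp_int_mul_two_pi_mul_I, exp_pi_div_two_mul_I, one_mul]

theorem Complex.norm_I_sub_one_sq : ‖I - 1‖ ^ 2 = 2 := by
  rw [← normSq_eq_norm_sq, normSq_apply]
  norm_num

theorem Real.rpow_two_mul_add_le_one_add_sq_rpow_mul {x : ℝ} (hx : 0 < x) {a : ℝ} (ha : 0 ≤ a)
    (b : ℝ) : x ^ (2 * a + b) ≤ (1 + x ^ 2) ^ a * x ^ b := by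
  rw [Real.rpow_add hx, Real.rpow_mul hx.le, Real.rpow_two]
  gcongr
  linarith

theorem not_summable_one_div_mul_add {m : ℕ} (hm : m ≠ 0) (k : ℕ) :
    ¬ Summable (fun j : ℕ ↦ 1 / ((m * j + k : ℕ) : ℝ)) := by
  have : NeZero m := ⟨hm⟩
  exact (summable_indicator_mod_iff_summable m k fun n : ℕ ↦ 1 / (n : ℝ)).not.1
    (Real.not_summable_indicator_one_div_natCast hm k)

theorem not_summable_of_div_le_comp_mul_add {f : ℕ → ℝ} {m : ℕ} (hm : m ≠ 0) (k : ℕ) {c : ℝ}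
    (hc : 0 < c) (h : ∀ j, c / ((m * j + k : ℕ) : ℝ) ≤ f (m * j + k)) : ¬ Summable f := by
  intro hf
  have hinj : Function.Injective (fun j : ℕ ↦ m * j + k) := fun a b hab ↦ by
    simpa [hm] using hab
  have hsub : Summable (fun j : ℕ ↦ c * (1 / ((m * j + k : ℕ) : ℝ))) := by
    refine (hf.comp_injective hinj).of_nonneg_of_le (fun j ↦ by positivity) fun j ↦ ?_
    simpa only [mul_one_div, Function.comp_apply] using h j
  exact not_summable_one_div_mul_add hm k ((summable_mul_left_iff hc.ne').1 hsub)

/-- Divergence of the second Picard iterate, case `p = ∞` (core of Theorem 1.4):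
for `s ≥ 0` and a positive integer `M₀`, with `t = (π/2) M₀⁻²`, the series
`Σ_{k≥1} (1+k²)^{s+3/2} k^{−(4+2s)} |e^{itk²} − 1|²` diverges. -/
theorem second_iterate_not_summable_p_infty (s : ℝ) (hs : 0 ≤ s) (M₀ : ℕ) (hM : 0 < M₀) :
    ¬ Summable (fun k : ℕ =>
      (1 + ((k : ℝ) + 1) ^ 2) ^ (s + 3 / 2) * ((k : ℝ) + 1) ^ (-(4 + 2 * s)) *
        ‖Complex.exp (Complex.I *
            (((Real.pi / 2) * ((M₀ : ℝ) ^ 2)⁻¹ * ((k : ℝ) + 1) ^ 2 : ℝ) : ℂ)) - 1‖ ^ 2) := by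
  set g : ℝ → ℝ := fun x ↦ (1 + x ^ 2) ^ (s + 3 / 2) * x ^ (-(4 + 2 * s)) *
    ‖exp (I * (((π / 2) * ((M₀ : ℝ) ^ 2)⁻¹ * x ^ 2 : ℝ) : ℂ)) - 1‖ ^ 2
  have hshift : (Summable fun k : ℕ ↦ g ((k : ℝ) + 1)) ↔ Summable fun n : ℕ ↦ g n := by
    simpa only [Nat.cast_add, Nat.cast_one] using summable_nat_add_iff (f := fun n : ℕ ↦ g n) 1
  change ¬ Summable fun k : ℕ ↦ g ((k : ℝ) + 1)
  rw [hshift]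
  refine not_summable_of_div_le_comp_mul_add (m := 2 * M₀) (by positivity) M₀ two_pos fun j ↦ ?_
  have hn : (((2 * M₀ * j + M₀ : ℕ)) : ℝ) = M₀ * ((2 * j + 1 : ℤ) : ℝ) := by push_cast; ring
  have hnpos : (0 : ℝ) < M₀ * ((2 * j + 1 : ℤ) : ℝ) := by push_cast; positivity
  have hphase : π / 2 * ((M₀ : ℝ) ^ 2)⁻¹ * (M₀ * ((2 * j + 1 : ℤ) : ℝ)) ^ 2
      = π / 2 * ((2 * j + 1 : ℤ) : ℝ) ^ 2 := by field_simp
  have hweight := Real.rpow_two_mul_add_le_one_add_sq_rpow_mul hnpos (a := s + 3 / 2)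
    (by linarith) (-(4 + 2 * s))
  rw [show 2 * (s + 3 / 2) + -(4 + 2 * s) = -1 by ring, Real.rpow_neg_one] at hweight
  simp only [g, hn, hphase, exp_I_mul_pi_div_two_mul_sq_of_odd (odd_two_mul_add_one (j : ℤ)),
    norm_I_sub_one_sq]
  rw [div_eq_mul_inv, mul_comm]
  gcongr
end

section
/- Divergence of the second Picard iterate, case 2 < p < ∞ (core of Theorem 1.4): Let s ≥ 0, 2 < p < ∞, and α with 1/p < α < 1/2. Then for every positive integer M₀, setting t = (π/2) M₀^{−2}, the series Σ_{k=2}^∞ (1+k²)^{s+3/2+1/p} k^{−(4+2s+2/p)} (ln k)^{−2α} |e^{itk²} − 1|² diverges. -/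
/-!
Along the odd multiples `N = M₀ (2m + 3)` the phase `t N² = (π/2)(2m + 3)²` is an odd multiple of
`π/2`, so the oscillating factor `|e^{itN²} - 1|² = 2 - 2 cos (t N²)` equals `2` there. Since
`(1 + N²)^q ≥ N^{2q}` and `2α ≤ 1`, the weights make those terms at least `(N log N)⁻¹`. The
Bertrand series `∑ (N log N)⁻¹` diverges by Cauchy condensation, and, its terms being antitone,
so does its restriction to a residue class.
-/

open Real

lemma Complex.norm_exp_I_mul_ofReal_sub_one_sq (x : ℝ) :
    ‖Complex.exp (Complex.I * x) - 1‖ ^ 2 = 2 * (1 - Real.cos x) := by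
  rw [Complex.norm_exp_I_mul_ofReal_sub_one, norm_mul, mul_pow, Real.norm_eq_abs, sq_abs,
    ← mul_div_cancel₀ x (two_ne_zero' ℝ), Real.cos_two_mul, Real.cos_sq']
  norm_num
  ring

lemma Real.cos_pi_div_two_mul_inv_sq_mul_sq_of_odd {M : ℝ} (hM : M ≠ 0) {n : ℤ} (hn : Odd n) :
    cos (π / 2 * (M ^ 2)⁻¹ * (M * n) ^ 2) = 0 := by
  obtain ⟨k, hk⟩ := hn.pow (n := 2)
  have hk' : (n : ℝ) ^ 2 = 2 * k + 1 := by exact_mod_cast hk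
  refine cos_eq_zero_iff.2 ⟨k, ?_⟩
  field_simp
  rw [hk']

lemma Real.antitoneOn_inv_mul_log : AntitoneOn (fun x : ℝ => (x * log x)⁻¹) (Set.Ioi 1) :=
  fun _ hx _ _ hxy => inv_anti₀ (mul_pos (zero_lt_one.trans hx) (log_pos hx))
    (mul_le_mul hxy (log_le_log (zero_lt_one.trans hx) hxy) (log_pos hx).le
      (zero_le_one.trans (hx.out.le.trans hxy)))

lemma Real.not_summable_inv_natCast_mul_log :
    ¬ Summable fun n : ℕ => ((n : ℝ) * log n)⁻¹ := by
  have h_nonneg : ∀ n : ℕ, 0 ≤ ((n : ℝ) * log n)⁻¹ := fun n => by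
    have := log_natCast_nonneg n
    positivity
  have h_mono : ∀ᶠ n : ℕ in Filter.atTop,
      (((n + 1 : ℕ) : ℝ) * log (n + 1 : ℕ))⁻¹ ≤ ((n : ℝ) * log n)⁻¹ :=
    Filter.eventually_atTop.2 ⟨2, fun n hn => antitoneOn_inv_mul_log
      (Set.mem_Ioi.2 (Nat.one_lt_cast.2 (by omega : 1 < n)))
      (Set.mem_Ioi.2 (Nat.one_lt_cast.2 (by omega : 1 < n + 1))) (by simp)⟩
  rw [← summable_condensed_iff_of_eventually_nonneg (.of_forall h_nonneg) h_mono]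
  have h_condensed (k : ℕ) :
      (2 : ℝ) ^ k * (((2 ^ k : ℕ) : ℝ) * log (2 ^ k : ℕ))⁻¹ = (log 2)⁻¹ * (k : ℝ)⁻¹ := by
    push_cast
    rw [log_pow, mul_inv, ← mul_assoc, mul_inv_cancel₀ (by positivity), one_mul, mul_inv,
      mul_comm]
  simp_rw [h_condensed, summable_mul_left_iff (inv_ne_zero (log_pos one_lt_two).ne')]
  exact not_summable_natCast_inv

lemma Antitone.summable_comp_mul_add_iff {f : ℕ → ℝ} (hf : Antitone f) {m : ℕ} (hm : m ≠ 0)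
    (k : ℕ) : Summable (fun n => f (m * n + k)) ↔ Summable f := by
  have : NeZero m := ⟨hm⟩
  rw [← summable_indicator_mod_iff_summable, summable_indicator_mod_iff hf]

lemma Real.not_summable_inv_add_two_mul_log_comp_mul_add {m : ℕ} (hm : m ≠ 0) (k : ℕ) :
    ¬ Summable fun n : ℕ =>
      ((((m * n + k : ℕ) : ℝ) + 2) * log (((m * n + k : ℕ) : ℝ) + 2))⁻¹ := by
  have h_one_lt (n : ℕ) : (1 : ℝ) < n + 2 := lt_add_of_nonneg_of_lt n.cast_nonneg one_lt_two
  have h_anti : Antitone fun n : ℕ => (((n : ℝ) + 2) * log ((n : ℝ) + 2))⁻¹ := fun x y hxy =>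
    antitoneOn_inv_mul_log (h_one_lt x) (h_one_lt y) (by gcongr)
  rw [h_anti.summable_comp_mul_add_iff hm]
  exact fun h => not_summable_inv_natCast_mul_log <|
    (summable_nat_add_iff 2).1 (by simpa only [Nat.cast_add, Nat.cast_ofNat] using h)

lemma inv_mul_log_le_rpow_mul_log_rpow {N q β : ℝ} (hN : exp 1 ≤ N) (hq : 0 ≤ q) (hβ : β ≤ 1) :
    (N * log N)⁻¹ ≤ (1 + N ^ 2) ^ q * N ^ (-(2 * q + 1)) * log N ^ (-β) := by
  have hN0 : 0 < N := (exp_pos 1).trans_le hN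
  have hlog : 1 ≤ log N := by rwa [le_log_iff_exp_le hN0]
  have h_pow : N ^ (2 * q) ≤ (1 + N ^ 2) ^ q := by
    rw [rpow_mul hN0.le, rpow_two]
    exact rpow_le_rpow (by positivity) (by linarith) hq
  have h_log : (log N)⁻¹ ≤ log N ^ (-β) := by
    rw [← rpow_neg_one]
    exact rpow_le_rpow_of_exponent_le hlog (by linarith)
  calc (N * log N)⁻¹ = N ^ (2 * q) * N ^ (-(2 * q + 1)) * (log N)⁻¹ := by
        rw [← rpow_add hN0, show 2 * q + -(2 * q + 1) = -1 by ring, rpow_neg_one, mul_inv]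
    _ ≤ (1 + N ^ 2) ^ q * N ^ (-(2 * q + 1)) * log N ^ (-β) := by gcongr

lemma inv_mul_log_le_of_cos_eq_zero {s p α t N : ℝ} (hs : 0 ≤ s) (hp : 0 < p) (hα : α < 1 / 2)
    (hN : exp 1 ≤ N) (hcos : cos (t * N ^ 2) = 0) :
    (N * log N)⁻¹ ≤ (1 + N ^ 2) ^ (s + 3 / 2 + 1 / p) * N ^ (-(4 + 2 * s + 2 / p)) *
      log N ^ (-(2 * α)) * ‖Complex.exp (Complex.I * ((t * N ^ 2 : ℝ) : ℂ)) - 1‖ ^ 2 := by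
  have h_bound := inv_mul_log_le_rpow_mul_log_rpow (q := s + 3 / 2 + 1 / p) (β := 2 * α) hN
    (by have := one_div_pos.2 hp; linarith) (by linarith)
  rw [show -(4 + 2 * s + 2 / p) = -(2 * (s + 3 / 2 + 1 / p) + 1) by ring,
    Complex.norm_exp_I_mul_ofReal_sub_one_sq, hcos]
  have h_nonneg : 0 ≤ (N * log N)⁻¹ := inv_nonneg.2 (mul_nonneg ((exp_pos 1).le.trans hN)
    (log_nonneg ((one_le_exp zero_le_one).trans hN)))
  exact h_bound.trans (le_mul_of_one_le_right (h_nonneg.trans h_bound) (by norm_num))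

theorem second_iterate_not_summable_p_finite_general (s p α : ℝ) (hs : 0 ≤ s) (hp : 2 < p)
    (hα2 : α < 1 / 2) (M₀ : ℕ) (hM : 0 < M₀) :
    ¬ Summable (fun k : ℕ =>
      (1 + ((k : ℝ) + 2) ^ 2) ^ (s + 3 / 2 + 1 / p) *
        ((k : ℝ) + 2) ^ (-(4 + 2 * s + 2 / p)) *
        Real.log ((k : ℝ) + 2) ^ (-(2 * α)) *
        ‖Complex.exp (Complex.I *
            (((Real.pi / 2) * ((M₀ : ℝ) ^ 2)⁻¹ * ((k : ℝ) + 2) ^ 2 : ℝ) : ℂ)) - 1‖ ^ 2) := by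
  intro hsum
  have h_period : 2 * M₀ ≠ 0 := by omega
  have h_inj : Function.Injective fun m : ℕ => 2 * M₀ * m + (3 * M₀ - 2) :=
    fun _ _ h => by simpa [h_period] using h
  refine not_summable_inv_add_two_mul_log_comp_mul_add h_period (3 * M₀ - 2) <|
    .of_nonneg_of_le (fun m => ?_) (fun m => ?_) (hsum.comp_injective h_inj)
  · exact inv_nonneg.2 (mul_nonneg (by positivity)
      (log_nonneg (le_add_of_nonneg_of_le (Nat.cast_nonneg _) one_le_two)))
  have hN : ((2 * M₀ * m + (3 * M₀ - 2) : ℕ) : ℝ) + 2 = M₀ * (2 * m + 3) := by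
    rw [Nat.cast_add, Nat.cast_sub (by omega)]
    push_cast
    ring
  refine inv_mul_log_le_of_cos_eq_zero hs (zero_lt_two.trans hp) hα2 ?_ ?_ <;> rw [hN]
  · have hM_one : (1 : ℝ) ≤ M₀ := by exact_mod_cast hM
    have : (3 : ℝ) ≤ M₀ * (2 * m + 3) := by nlinarith [(m.cast_nonneg : (0 : ℝ) ≤ m)]
    linarith [exp_one_lt_d9]
  · exact_mod_cast cos_pi_div_two_mul_inv_sq_mul_sq_of_odd (M := M₀) (by positivity)
      (n := 2 * m + 3) ⟨m + 1, by ring⟩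

/-- Divergence of the second Picard iterate, case `2 < p < ∞` (core of Theorem 1.4):
for `s ≥ 0`, `2 < p < ∞`, `1/p < α < 1/2`, and a positive integer `M₀`, with
`t = (π/2) M₀⁻²`, the series
`Σ_{k≥2} (1+k²)^{s+3/2+1/p} k^{−(4+2s+2/p)} (ln k)^{−2α} |e^{itk²} − 1|²` diverges. -/
theorem second_iterate_not_summable_p_finite (s p α : ℝ) (hs : 0 ≤ s) (hp : 2 < p)
    (hα1 : 1 / p < α) (hα2 : α < 1 / 2) (M₀ : ℕ) (hM : 0 < M₀) :
    ¬ Summable (fun k : ℕ =>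
      (1 + ((k : ℝ) + 2) ^ 2) ^ (s + 3 / 2 + 1 / p) *
        ((k : ℝ) + 2) ^ (-(4 + 2 * s + 2 / p)) *
        Real.log ((k : ℝ) + 2) ^ (-(2 * α)) *
        ‖Complex.exp (Complex.I *
            (((Real.pi / 2) * ((M₀ : ℝ) ^ 2)⁻¹ * ((k : ℝ) + 2) ^ 2 : ℝ) : ℂ)) - 1‖ ^ 2) :=
  second_iterate_not_summable_p_finite_general s p α hs hp hα2 M₀ hM
end

section
/- Trilinear product estimate at negative regularity (key estimate in the proof of Theorem 1.2, combining S₁ and S₂): Let s ≥ 0, 2 ≤ p < ∞, set σ = s + 1/p − 1/2, and assume σ < 0; let ε > 0 and set ρ = s + 3/2 + 1/p + ε. There exists a constant C > 0 such that for all sequences a, c : ℤ → ℂ with ‖a‖_{h^ρ} < ∞ and ‖c‖_{h^σ} < ∞, the triple convolution T_k = Σ_{k₁+k₂+k₃=k} a_{k₁} a_{k₂} c_{k₃} converges absolutely for every k ∈ ℤ and satisfies ( Σ_{k∈ℤ} ⟨k⟩^{2σ} |T_k|² )^{1/2} ≤ C ‖a‖_{h^ρ}² ‖c‖_{h^σ}.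 -/
/-- The Japanese bracket `⟨k⟩ = (1 + k²)^{1/2}` of an integer `k`. -/
noncomputable def jbr (k : ℤ) : ℝ := Real.sqrt (1 + (k : ℝ) ^ 2)

/-- The `h^σ` norm `(Σ_k ⟨k⟩^{2σ} |w_k|²)^{1/2}` of a sequence. -/
noncomputable def hnorm (σ : ℝ) (w : ℤ → ℂ) : ℝ :=
  (∑' k : ℤ, jbr k ^ (2 * σ) * ‖w k‖ ^ 2) ^ ((1 : ℝ) / 2)

/-!
Write `A_j = ⟨j⟩^{|σ|} |a_j|` and `C_j = ⟨j⟩^σ |c_j|`. Peetre's inequality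
`⟨k₁ + k₂ + k₃⟩^σ ≤ 4^{|σ|} ⟨k₁⟩^{|σ|} ⟨k₂⟩^{|σ|} ⟨k₃⟩^σ` bounds `⟨k⟩^σ |T_k|` by
`4^{|σ|} (A ∗ A ∗ C)_k`. Young's inequality `‖F ∗ C‖_{ℓ²} ≤ ‖F‖_{ℓ¹} ‖C‖_{ℓ²}`, applied with
`F = A ⊗ A` pushed forward along `(k₁, k₂) ↦ k₁ + k₂`, gives
`‖T‖_{h^σ} ≤ 4^{|σ|} ‖A‖_{ℓ¹}² ‖c‖_{h^σ}`, and by Cauchy–Schwarz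
`‖A‖_{ℓ¹}² ≤ (Σ_j ⟨j⟩^{-2(ρ - |σ|)}) ‖a‖_{h^ρ}²`, which is finite since `ρ > |σ| + 1/2`.
-/

open Real

theorem summable_and_sq_tsum_le_tsum_mul_tsum {ι : Type*} {r f g : ι → ℝ}
    (hf : ∀ i, 0 ≤ f i) (hg : ∀ i, 0 ≤ g i) (hrfg : ∀ i, r i ^ 2 ≤ f i * g i)
    (hf_sum : Summable f) (hg_sum : Summable g) :
    Summable r ∧ (∑' i, r i) ^ 2 ≤ (∑' i, f i) * ∑' i, g i := by
  have hr_sum : Summable r := ((hf_sum.add hg_sum).div_const 2).of_norm_bounded fun i => by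
    have := two_mul_le_add_of_sq_le_mul (hf i) (hg i) ((sq_abs (r i)).trans_le (hrfg i))
    rw [norm_eq_abs]; linarith
  refine ⟨hr_sum, le_of_tendsto_of_tendsto' (hr_sum.hasSum.pow 2)
    (Filter.Tendsto.mul hf_sum.hasSum hg_sum.hasSum) fun s => ?_⟩
  exact Finset.sum_sq_le_sum_mul_sum_of_sq_le_mul s (fun i _ => hf i) (fun i _ => hg i)
    fun i _ => hrfg i

theorem summable_and_tsum_sq_conv_le {ι G : Type*} [AddCommGroup G] (φ : ι → G)
    {f : ι → ℝ} {g : G → ℝ} (hf : ∀ i, 0 ≤ f i) (hf_sum : Summable f)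
    (hg_sum : Summable fun x => g x ^ 2) :
    (∀ x, Summable fun i => f i * g (x - φ i)) ∧
      Summable (fun x => (∑' i, f i * g (x - φ i)) ^ 2) ∧
      ∑' x, (∑' i, f i * g (x - φ i)) ^ 2 ≤ (∑' i, f i) ^ 2 * ∑' x, g x ^ 2 := by
  -- Cauchy–Schwarz with weights `f` at each `x`, then Fubini and translation invariance of `Σ g²`.
  set M := ∑' x, g x ^ 2
  set F : ι → G → ℝ := fun i x => f i * g (x - φ i) ^ 2
  have hF_row (i : ι) : HasSum (F i) (f i * M) :=
    ((Equiv.subRight (φ i)).hasSum_iff.2 hg_sum.hasSum).mul_left (f i)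
  have hF : Summable (Function.uncurry F) :=
    (summable_prod_of_nonneg fun q => mul_nonneg (hf _) (sq_nonneg _)).2
      ⟨fun i => (hF_row i).summable, (hf_sum.mul_right M).congr fun i => (hF_row i).tsum_eq.symm⟩
  obtain ⟨hF_col, hF_cols⟩ :=
    (summable_prod_of_nonneg fun q => mul_nonneg (hf _) (sq_nonneg _)).1 hF.prod_symm
  have hCS (x : G) := summable_and_sq_tsum_le_tsum_mul_tsum (r := fun i => f i * g (x - φ i))
    hf (fun i => mul_nonneg (hf i) (sq_nonneg _)) (fun i => le_of_eq (by dsimp; ring)) hf_sum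
    (hF_col x)
  have hbound : Summable fun x => (∑' i, f i) * ∑' i, F i x := hF_cols.mul_left _
  have hsq : Summable fun x => (∑' i, f i * g (x - φ i)) ^ 2 :=
    hbound.of_nonneg_of_le (fun x => sq_nonneg _) fun x => (hCS x).2
  refine ⟨fun x => (hCS x).1, hsq, ?_⟩
  calc ∑' x, (∑' i, f i * g (x - φ i)) ^ 2 ≤ ∑' x, (∑' i, f i) * ∑' i, F i x :=
        hsq.tsum_le_tsum (fun x => (hCS x).2) hbound
    _ = (∑' i, f i) * ∑' i, f i * M := by
        rw [tsum_mul_left, hF.tsum_comm, tsum_congr fun i => (hF_row i).tsum_eq]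
    _ = (∑' i, f i) ^ 2 * M := by rw [tsum_mul_right]; ring

lemma jbr_pos (k : ℤ) : 0 < jbr k := sqrt_pos.2 (by positivity)

lemma jbr_neg (k : ℤ) : jbr (-k) = jbr k := by simp [jbr]

lemma abs_le_jbr (k : ℤ) : |(k : ℝ)| ≤ jbr k := by
  rw [← sqrt_sq_eq_abs]
  exact sqrt_le_sqrt (by linarith)

lemma jbr_add_le (x y : ℤ) : jbr (x + y) ≤ 2 * jbr x * jbr y := by
  refine sqrt_le_iff.2 ⟨by have := jbr_pos x; have := jbr_pos y; positivity, ?_⟩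
  rw [mul_pow, mul_pow, jbr, jbr, sq_sqrt (by positivity), sq_sqrt (by positivity)]
  push_cast
  nlinarith [sq_nonneg ((x : ℝ) - y), sq_nonneg ((x : ℝ) * y)]

lemma jbr_rpow_le_two_rpow_mul (σ : ℝ) (k j : ℤ) :
    jbr k ^ σ ≤ 2 ^ |σ| * jbr j ^ |σ| * jbr (k - j) ^ σ := by
  rcases le_or_gt 0 σ with hσ | hσ
  · rw [abs_of_nonneg hσ, ← mul_rpow zero_le_two (jbr_pos j).le,
      ← mul_rpow (by have := jbr_pos j; positivity) (jbr_pos _).le]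
    exact rpow_le_rpow (jbr_pos k).le (by simpa using jbr_add_le j (k - j)) hσ
  · have hkj : jbr (k - j) ≤ 2 * jbr k * jbr j := by
      simpa [jbr_neg, ← sub_eq_add_neg] using jbr_add_le k (-j)
    have h := rpow_le_rpow_of_nonpos (jbr_pos _) hkj hσ.le
    rw [mul_rpow (by have := jbr_pos k; positivity) (jbr_pos j).le,
      mul_rpow zero_le_two (jbr_pos k).le] at h
    rw [abs_of_neg hσ, rpow_neg zero_le_two, rpow_neg (jbr_pos j).le, ← mul_inv, ← div_eq_inv_mul,
      le_div_iff₀ (by have := jbr_pos j; positivity)]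
    linarith

lemma jbr_rpow_le_four_rpow_mul (σ : ℝ) (k m₁ m₂ : ℤ) :
    jbr k ^ σ ≤ 4 ^ |σ| * (jbr m₁ ^ |σ| * jbr m₂ ^ |σ| * jbr (k - (m₁ + m₂)) ^ σ) := by
  have h₁₂ : jbr (m₁ + m₂) ^ |σ| ≤ 2 ^ |σ| * jbr m₁ ^ |σ| * jbr m₂ ^ |σ| := by
    rw [← mul_rpow zero_le_two (jbr_pos _).le,
      ← mul_rpow (by have := jbr_pos m₁; positivity) (jbr_pos _).le]
    exact rpow_le_rpow (jbr_pos _).le (jbr_add_le _ _) (abs_nonneg σ)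
  calc jbr k ^ σ ≤ 2 ^ |σ| * jbr (m₁ + m₂) ^ |σ| * jbr (k - (m₁ + m₂)) ^ σ :=
        jbr_rpow_le_two_rpow_mul σ k _
    _ ≤ 2 ^ |σ| * (2 ^ |σ| * jbr m₁ ^ |σ| * jbr m₂ ^ |σ|) * jbr (k - (m₁ + m₂)) ^ σ := by
        have := jbr_pos (k - (m₁ + m₂)); gcongr
    _ = _ := by
        rw [show (4 : ℝ) = 2 * 2 by norm_num, mul_rpow zero_le_two zero_le_two]; ring

lemma summable_jbr_rpow_neg {r : ℝ} (hr : 1 < r) : Summable fun k : ℤ => jbr k ^ (-r) := by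
  refine (summable_abs_int_rpow hr).of_norm_bounded_eventually ?_
  filter_upwards [Set.Finite.compl_mem_cofinite (Set.finite_singleton 0)] with k hk
  rw [norm_of_nonneg (rpow_nonneg (jbr_pos k).le _)]
  exact rpow_le_rpow_of_nonpos (abs_pos.2 (Int.cast_ne_zero.2 hk)) (abs_le_jbr k) (by linarith)

noncomputable def weighted (σ : ℝ) (w : ℤ → ℂ) (k : ℤ) : ℝ := jbr k ^ σ * ‖w k‖

lemma weighted_nonneg (σ : ℝ) (w : ℤ → ℂ) (k : ℤ) : 0 ≤ weighted σ w k :=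
  mul_nonneg (rpow_nonneg (jbr_pos k).le _) (norm_nonneg _)

lemma weighted_sq (σ : ℝ) (w : ℤ → ℂ) (k : ℤ) :
    weighted σ w k ^ 2 = jbr k ^ (2 * σ) * ‖w k‖ ^ 2 := by
  rw [weighted, mul_pow, ← rpow_mul_natCast (jbr_pos k).le, mul_comm σ]
  norm_num

lemma hnorm_sq (σ : ℝ) (w : ℤ → ℂ) : hnorm σ w ^ 2 = ∑' k, jbr k ^ (2 * σ) * ‖w k‖ ^ 2 := by
  rw [hnorm, ← sqrt_eq_rpow, sq_sqrt (tsum_nonneg fun k => by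
    have := jbr_pos k; positivity)]

lemma hnorm_nonneg (σ : ℝ) (w : ℤ → ℂ) : 0 ≤ hnorm σ w :=
  rpow_nonneg (tsum_nonneg fun k => by have := jbr_pos k; positivity) _

lemma summable_and_sq_tsum_weighted_le {τ ρ : ℝ} (hτρ : τ + 1 / 2 < ρ) {a : ℤ → ℂ}
    (ha : Summable fun k => jbr k ^ (2 * ρ) * ‖a k‖ ^ 2) :
    Summable (weighted τ a) ∧
      (∑' k, weighted τ a k) ^ 2 ≤ (∑' k, jbr k ^ (-(2 * (ρ - τ)))) * hnorm ρ a ^ 2 := by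
  rw [hnorm_sq]
  refine summable_and_sq_tsum_le_tsum_mul_tsum (fun k => rpow_nonneg (jbr_pos k).le _)
    (fun k => by have := jbr_pos k; positivity) (fun k => le_of_eq ?_)
    (summable_jbr_rpow_neg (by linarith)) ha
  rw [weighted_sq, ← mul_assoc, ← rpow_add (jbr_pos k)]
  ring_nf

noncomputable def tripleConv (a c : ℤ → ℂ) (k : ℤ) : ℂ :=
  ∑' m : ℤ × ℤ, a m.1 * a m.2 * c (k - m.1 - m.2)

lemma jbr_rpow_mul_norm_le (σ : ℝ) (a c : ℤ → ℂ) (k : ℤ) (m : ℤ × ℤ) :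
    jbr k ^ σ * ‖a m.1 * a m.2 * c (k - m.1 - m.2)‖ ≤
      4 ^ |σ| * (weighted |σ| a m.1 * weighted |σ| a m.2 * weighted σ c (k - (m.1 + m.2))) := by
  rw [norm_mul, norm_mul, sub_sub]
  calc _ ≤ 4 ^ |σ| * (jbr m.1 ^ |σ| * jbr m.2 ^ |σ| * jbr (k - (m.1 + m.2)) ^ σ) *
        (‖a m.1‖ * ‖a m.2‖ * ‖c (k - (m.1 + m.2))‖) := by
        gcongr; exact jbr_rpow_le_four_rpow_mul σ k m.1 m.2
    _ = _ := by simp only [weighted]; ring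

lemma summable_and_weighted_tripleConv_le (σ : ℝ) (a c : ℤ → ℂ) (k : ℤ)
    (hS : Summable fun m : ℤ × ℤ =>
      weighted |σ| a m.1 * weighted |σ| a m.2 * weighted σ c (k - (m.1 + m.2))) :
    (Summable fun m : ℤ × ℤ => ‖a m.1 * a m.2 * c (k - m.1 - m.2)‖) ∧
      weighted σ (tripleConv a c) k ≤ 4 ^ |σ| * ∑' m : ℤ × ℤ,
        weighted |σ| a m.1 * weighted |σ| a m.2 * weighted σ c (k - (m.1 + m.2)) := by
  have hk : 0 < jbr k ^ σ := rpow_pos_of_pos (jbr_pos k) σ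
  have hrow : Summable fun m : ℤ × ℤ => ‖a m.1 * a m.2 * c (k - m.1 - m.2)‖ :=
    (summable_mul_left_iff hk.ne').1 <| (hS.mul_left (4 ^ |σ|)).of_nonneg_of_le
      (fun m => by positivity) (jbr_rpow_mul_norm_le σ a c k)
  refine ⟨hrow, ?_⟩
  calc weighted σ (tripleConv a c) k
      ≤ jbr k ^ σ * ∑' m : ℤ × ℤ, ‖a m.1 * a m.2 * c (k - m.1 - m.2)‖ :=
        mul_le_mul_of_nonneg_left (norm_tsum_le_tsum_norm hrow) hk.le
    _ ≤ _ := by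
        rw [← tsum_mul_left, ← tsum_mul_left]
        exact (hrow.mul_left _).tsum_le_tsum (jbr_rpow_mul_norm_le σ a c k) (hS.mul_left _)

theorem trilinear_estimate {σ ρ : ℝ} (hσρ : |σ| + 1 / 2 < ρ) {a c : ℤ → ℂ}
    (ha : Summable fun k => jbr k ^ (2 * ρ) * ‖a k‖ ^ 2)
    (hc : Summable fun k => jbr k ^ (2 * σ) * ‖c k‖ ^ 2) :
    (∀ k, Summable fun m : ℤ × ℤ => ‖a m.1 * a m.2 * c (k - m.1 - m.2)‖) ∧
      Summable (fun k => jbr k ^ (2 * σ) * ‖tripleConv a c k‖ ^ 2) ∧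
      hnorm σ (tripleConv a c) ≤
        4 ^ |σ| * (∑' k, jbr k ^ (-(2 * (ρ - |σ|)))) * hnorm ρ a ^ 2 * hnorm σ c := by
  set A := weighted |σ| a
  set S := fun k => ∑' m : ℤ × ℤ, A m.1 * A m.2 * weighted σ c (k - (m.1 + m.2))
  obtain ⟨hA, hA_le⟩ := summable_and_sq_tsum_weighted_le hσρ ha
  have hAA : Summable fun m : ℤ × ℤ => A m.1 * A m.2 :=
    hA.mul_of_nonneg hA (weighted_nonneg _ a) (weighted_nonneg _ a)
  obtain ⟨hS_row, hS, hS_le⟩ := summable_and_tsum_sq_conv_le (fun m : ℤ × ℤ => m.1 + m.2)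
    (fun m => mul_nonneg (weighted_nonneg _ a m.1) (weighted_nonneg _ a m.2)) hAA
    (g := weighted σ c) (by simpa only [weighted_sq] using hc)
  have hT k := summable_and_weighted_tripleConv_le σ a c k (hS_row k)
  have hT_sq (k : ℤ) : jbr k ^ (2 * σ) * ‖tripleConv a c k‖ ^ 2 ≤ (4 ^ |σ|) ^ 2 * S k ^ 2 := by
    rw [← weighted_sq, ← mul_pow]
    exact pow_le_pow_left₀ (weighted_nonneg _ _ _) (hT k).2 2
  have hT_sum := (hS.mul_left ((4 ^ |σ|) ^ 2)).of_nonneg_of_le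
    (fun k => by have := jbr_pos k; positivity) hT_sq
  have hAA_eq : ∑' m : ℤ × ℤ, A m.1 * A m.2 = (∑' k, A k) ^ 2 := by
    rw [sq, hA.tsum_mul_tsum hA hAA]
  have hc_eq : ∑' k, weighted σ c k ^ 2 = hnorm σ c ^ 2 := by simp only [weighted_sq, hnorm_sq]
  have hK : 0 ≤ ∑' k, jbr k ^ (-(2 * (ρ - |σ|))) :=
    tsum_nonneg fun k => rpow_nonneg (jbr_pos k).le _
  have hc_nonneg := hnorm_nonneg σ c
  refine ⟨fun k => (hT k).1, hT_sum, le_of_pow_le_pow_left₀ two_ne_zero (by positivity) ?_⟩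
  calc hnorm σ (tripleConv a c) ^ 2 = ∑' k, jbr k ^ (2 * σ) * ‖tripleConv a c k‖ ^ 2 :=
        hnorm_sq _ _
    _ ≤ ∑' k, (4 ^ |σ|) ^ 2 * S k ^ 2 := hT_sum.tsum_le_tsum hT_sq (hS.mul_left _)
    _ ≤ (4 ^ |σ|) ^ 2 * ((∑' m : ℤ × ℤ, A m.1 * A m.2) ^ 2 * ∑' k, weighted σ c k ^ 2) := by
        rw [tsum_mul_left]; gcongr
    _ = (4 ^ |σ| * (∑' k, A k) ^ 2 * hnorm σ c) ^ 2 := by rw [hAA_eq, hc_eq]; ring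
    _ ≤ _ := by
        rw [mul_assoc (4 ^ |σ|) (∑' k, _)]
        gcongr

theorem trilinear_product_estimate_general (s p ε : ℝ) (hs : 0 ≤ s) (hp : 2 ≤ p)
    (hε : 0 < ε) :
    ∃ C > 0, ∀ a c : ℤ → ℂ,
      Summable (fun k : ℤ => jbr k ^ (2 * (s + 3 / 2 + 1 / p + ε)) * ‖a k‖ ^ 2) →
      Summable (fun k : ℤ => jbr k ^ (2 * (s + 1 / p - 1 / 2)) * ‖c k‖ ^ 2) →
      (∀ k : ℤ, Summable (fun m : ℤ × ℤ => ‖a m.1 * a m.2 * c (k - m.1 - m.2)‖)) ∧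
      Summable (fun k : ℤ => jbr k ^ (2 * (s + 1 / p - 1 / 2)) *
        ‖∑' m : ℤ × ℤ, a m.1 * a m.2 * c (k - m.1 - m.2)‖ ^ 2) ∧
      hnorm (s + 1 / p - 1 / 2)
          (fun k => ∑' m : ℤ × ℤ, a m.1 * a m.2 * c (k - m.1 - m.2)) ≤
        C * hnorm (s + 3 / 2 + 1 / p + ε) a ^ 2 * hnorm (s + 1 / p - 1 / 2) c := by
  set σ := s + 1 / p - 1 / 2 with hσ
  set ρ := s + 3 / 2 + 1 / p + ε with hρ
  have hσρ : |σ| + 1 / 2 < ρ := by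
    have : 0 < 1 / p := by positivity
    have : |σ| < ρ - 1 / 2 := abs_lt.2 ⟨by linarith, by linarith⟩
    linarith
  have hK : 0 < ∑' k, jbr k ^ (-(2 * (ρ - |σ|))) :=
    (summable_jbr_rpow_neg (by linarith)).tsum_pos (fun k => rpow_nonneg (jbr_pos k).le _) 0
      (rpow_pos_of_pos (jbr_pos 0) _)
  exact ⟨_, mul_pos (by positivity) hK, fun a c ha hc => trilinear_estimate hσρ ha hc⟩

/-- Trilinear product estimate at negative regularity (key estimate in the proof of
Theorem 1.2): for `s ≥ 0`, `2 ≤ p < ∞`, `σ = s + 1/p − 1/2 < 0`, `ε > 0` and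
`ρ = s + 3/2 + 1/p + ε`, there is `C > 0` such that for all `a ∈ h^ρ` and `c ∈ h^σ`,
the triple convolution `T_k = Σ_{k₁+k₂+k₃=k} a_{k₁} a_{k₂} c_{k₃}` converges absolutely
for every `k` and satisfies `‖T‖_{h^σ} ≤ C ‖a‖_{h^ρ}² ‖c‖_{h^σ}`. -/
theorem trilinear_product_estimate (s p ε : ℝ) (hs : 0 ≤ s) (hp : 2 ≤ p)
    (hσ : s + 1 / p - 1 / 2 < 0) (hε : 0 < ε) :
    ∃ C > 0, ∀ a c : ℤ → ℂ,
      Summable (fun k : ℤ => jbr k ^ (2 * (s + 3 / 2 + 1 / p + ε)) * ‖a k‖ ^ 2) →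
      Summable (fun k : ℤ => jbr k ^ (2 * (s + 1 / p - 1 / 2)) * ‖c k‖ ^ 2) →
      (∀ k : ℤ, Summable (fun m : ℤ × ℤ => ‖a m.1 * a m.2 * c (k - m.1 - m.2)‖)) ∧
      Summable (fun k : ℤ => jbr k ^ (2 * (s + 1 / p - 1 / 2)) *
        ‖∑' m : ℤ × ℤ, a m.1 * a m.2 * c (k - m.1 - m.2)‖ ^ 2) ∧
      hnorm (s + 1 / p - 1 / 2)
          (fun k => ∑' m : ℤ × ℤ, a m.1 * a m.2 * c (k - m.1 - m.2)) ≤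
        C * hnorm (s + 3 / 2 + 1 / p + ε) a ^ 2 * hnorm (s + 1 / p - 1 / 2) c :=
  trilinear_product_estimate_general s p ε hs hp hε
end
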